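/- arXiv:1705.06808 — 4 statements merged into one kernel-verified Lean document; each statement's English description precedes it below -/
import Mathlib

section
/- Let m be a positive natural number and let Z be a real random variable whose distribution is the chi-squared distribution with m degrees of freedom (equivalently, the Gamma distribution with shape m/2 and rate 1/2). Then for every δ > 0, P(Z > m + δ) ≤ exp(−(1/2)·(δ + m − √(2δm + m²))). -/
/-!
Chernoff bound by a change of rate: for `s ≤ r`, on `x ≥ c` the Gamma(`a`, `r`) density is at most
`e^{-(r-s)c} (r/s)^a` times the Gamma(`a`, `s`) density, which has total mass one. The choice
`s = a / c` gives `P(Z > m + δ) ≤ e^{-δ/2} (1 + δ/m)^{m/2}`. Finally, with `v = √(1 + 2δ/m) - 1`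
one has `1 + δ/m = 1 + v + v²/2 ≤ e^v`, and `e^{-δ/2} e^{mv/2}` is the claimed bound.
-/

open MeasureTheory ProbabilityTheory Real

namespace ProbabilityTheory

variable {a r s : ℝ}

lemma gammaPDFReal_le_mul_gammaPDFReal (ha : 0 < a) (hs : 0 < s) (hsr : s ≤ r) {c x : ℝ}
    (hcx : c ≤ x) :
    gammaPDFReal a r x ≤ exp (-((r - s) * c)) * (r / s) ^ a * gammaPDFReal a s x := by
  unfold gammaPDFReal
  split_ifs with hx
  · have hr : 0 < r := hs.trans_le hsr
    have hrate : r ^ a = (r / s) ^ a * s ^ a := by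
      rw [div_rpow hr.le hs.le, div_mul_cancel₀ _ (rpow_pos_of_pos hs a).ne']
    have hexp : exp (-(r * x)) ≤ exp (-((r - s) * c)) * exp (-(s * x)) := by
      rw [← exp_add, exp_le_exp]
      nlinarith [mul_le_mul_of_nonneg_left hcx (sub_nonneg.2 hsr)]
    have hGamma := Gamma_pos_of_pos ha
    calc r ^ a / Gamma a * x ^ (a - 1) * exp (-(r * x))
        = (r / s) ^ a * (s ^ a / Gamma a * x ^ (a - 1)) * exp (-(r * x)) := by
          rw [hrate]; ring
      _ ≤ (r / s) ^ a * (s ^ a / Gamma a * x ^ (a - 1))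
            * (exp (-((r - s) * c)) * exp (-(s * x))) := by gcongr
      _ = _ := by ring
  · simp

lemma gammaMeasure_Ioi_le (ha : 0 < a) (hs : 0 < s) (hsr : s ≤ r) (c : ℝ) :
    gammaMeasure a r (Set.Ioi c) ≤ ENNReal.ofReal (exp (-((r - s) * c)) * (r / s) ^ a) := by
  have hr : 0 < r := hs.trans_le hsr
  set K := exp (-((r - s) * c)) * (r / s) ^ a
  have hK : 0 ≤ K := by positivity
  have hpdf : ∀ x ∈ Set.Ioi c, gammaPDF a r x ≤ ENNReal.ofReal K * gammaPDF a s x := by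
    intro x hx
    rw [gammaPDF, gammaPDF, ← ENNReal.ofReal_mul hK]
    exact ENNReal.ofReal_le_ofReal (gammaPDFReal_le_mul_gammaPDFReal ha hs hsr (le_of_lt hx))
  have hmeas : Measurable (gammaPDF a s) := (measurable_gammaPDFReal a s).ennreal_ofReal
  calc gammaMeasure a r (Set.Ioi c) = ∫⁻ x in Set.Ioi c, gammaPDF a r x :=
        withDensity_apply _ measurableSet_Ioi
    _ ≤ ∫⁻ x in Set.Ioi c, ENNReal.ofReal K * gammaPDF a s x :=
        setLIntegral_mono (hmeas.const_mul _) hpdf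
    _ = ENNReal.ofReal K * ∫⁻ x in Set.Ioi c, gammaPDF a s x := lintegral_const_mul _ hmeas
    _ ≤ ENNReal.ofReal K * ∫⁻ x, gammaPDF a s x := by gcongr; exact Measure.restrict_le_self
    _ = ENNReal.ofReal K := by rw [lintegral_gammaPDF_eq_one ha hs, mul_one]

lemma gammaMeasure_Ioi_le_of_mean_le (ha : 0 < a) (hr : 0 < r) {c : ℝ} (hc : a / r ≤ c) :
    gammaMeasure a r (Set.Ioi c) ≤ ENNReal.ofReal (exp (a - r * c) * (r * c / a) ^ a) := by
  have hc0 : 0 < c := (div_pos ha hr).trans_le hc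
  have hs : a / c ≤ r := (div_le_iff₀ hc0).2 (by rwa [div_le_iff₀ hr, mul_comm] at hc)
  convert gammaMeasure_Ioi_le ha (div_pos ha hc0) hs c using 4
  · field_simp; ring
  · field_simp

end ProbabilityTheory

lemma one_add_div_le_exp_sqrt_sub_div {m δ : ℝ} (hm : 0 < m) (hδ : 0 ≤ δ) :
    1 + δ / m ≤ exp ((sqrt (2 * δ * m + m ^ 2) - m) / m) := by
  set s := sqrt (2 * δ * m + m ^ 2)
  have hs2 : s ^ 2 = 2 * δ * m + m ^ 2 := sq_sqrt (by positivity)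
  have hms : m ≤ s := le_sqrt_of_sq_le (by nlinarith)
  have htaylor : 1 + δ / m = 1 + (s - m) / m + ((s - m) / m) ^ 2 / 2 := by
    field_simp
    linear_combination -hs2
  rw [htaylor]
  exact quadratic_le_exp_of_nonneg (div_nonneg (sub_nonneg.2 hms) hm.le)

/-- Chi-squared tail bound (Lemma 5 of the paper, after Laurent–Massart):
if `Z` is chi-squared with `m` degrees of freedom, i.e. Gamma with shape `m/2` and
rate `1/2`, then `P(Z > m + δ) ≤ exp(−(1/2)(δ + m − √(2δm + m²)))`. -/
theorem chi_squared_tail_bound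
    {Ω : Type*} [MeasureSpace Ω] [IsProbabilityMeasure (ℙ : Measure Ω)]
    (m : ℕ) (hm : 0 < m) (Z : Ω → ℝ)
    (hZ : Measure.map Z ℙ = gammaMeasure ((m : ℝ) / 2) (1 / 2))
    (δ : ℝ) (hδ : 0 < δ) :
    ℙ {ω | (m : ℝ) + δ < Z ω}
      ≤ ENNReal.ofReal
          (Real.exp (-(1 / 2) * (δ + (m : ℝ) - Real.sqrt (2 * δ * (m : ℝ) + (m : ℝ) ^ 2)))) := by
  have hm' : (0 : ℝ) < m := by exact_mod_cast hm
  have hZm : AEMeasurable Z ℙ := .of_map_ne_zero <| by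
    rw [hZ]; exact (isProbabilityMeasure_gammaMeasure (by positivity) (by norm_num)).ne_zero
  have hmean : (m : ℝ) / 2 / (1 / 2) ≤ m + δ := by linarith
  calc ℙ {ω | (m : ℝ) + δ < Z ω} = gammaMeasure ((m : ℝ) / 2) (1 / 2) (Set.Ioi (m + δ)) := by
        rw [← hZ, Measure.map_apply_of_aemeasurable hZm measurableSet_Ioi]; rfl
    _ ≤ ENNReal.ofReal (exp (-(δ / 2)) * (1 + δ / m) ^ ((m : ℝ) / 2)) := by
        convert gammaMeasure_Ioi_le_of_mean_le (by positivity) (by norm_num) hmean using 4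
        · ring
        · field_simp
    _ ≤ ENNReal.ofReal
          (exp (-(δ / 2)) * exp ((sqrt (2 * δ * m + m ^ 2) - m) / m) ^ ((m : ℝ) / 2)) := by
        gcongr; exact one_add_div_le_exp_sqrt_sub_div hm' hδ.le
    _ = _ := by
        rw [← exp_mul, ← exp_add]; congr 2; field_simp; ring
end

section
/- Let m be a positive natural number and let θ = (θ₁,…,θ_m) be a random vector whose coordinates are independent standard Gaussian random variables (mean 0, variance 1). Then for every δ > 0, P(θ₁² + ⋯ + θ_m² ≥ m + 2√(mδ) + 2δ) ≤ exp(−δ). -/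
open MeasureTheory ProbabilityTheory Real
open scoped NNReal

/-!
Chernoff's method. For `2tv < 1` the moment generating function of `X²`, with `X ~ N(0, v)`, is
`(1 - 2tv)^(-1/2)`, so by independence `P(∑ θᵢ² ≥ a) ≤ e^(-ta) (1 - 2t)^(-m/2)`. For
`a = m + 2√(mδ) + 2δ` the optimal `t = (a - m) / (2a)` turns this into
`e^(-(√(mδ) + δ)) (a/m)^(m/2)`, and `a / m = 1 + x + x²/2 ≤ eˣ` with `x = 2√(mδ)/m` bounds
`(a/m)^(m/2)` by `e^√(mδ)`.
-/

namespace ProbabilityTheory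

lemma gaussianPDFReal_zero_mul_exp_mul_sq (v : ℝ≥0) (t x : ℝ) :
    gaussianPDFReal 0 v x * exp (t * x ^ 2) =
      (√(2 * π * v))⁻¹ * exp (-((2 * (v : ℝ))⁻¹ - t) * x ^ 2) := by
  rw [gaussianPDFReal, mul_assoc, ← exp_add]
  ring_nf

variable {v : ℝ≥0} {t : ℝ}

lemma integrable_exp_mul_sq_gaussianReal (ht : 2 * t * v < 1) :
    Integrable (fun x ↦ exp (t * x ^ 2)) (gaussianReal 0 v) := by
  rcases eq_or_ne v 0 with rfl | hv
  · rw [gaussianReal_zero_var]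
    exact integrable_dirac enorm_lt_top
  have hpos : 0 < (2 * (v : ℝ))⁻¹ - t := by
    rw [sub_pos, inv_eq_one_div, lt_div_iff₀ (by positivity)]
    linarith
  rw [gaussianReal_of_var_ne_zero 0 hv, gaussianPDF_def,
    integrable_withDensity_iff_integrable_smul' (by fun_prop)
      (ae_of_all _ fun _ ↦ ENNReal.ofReal_lt_top)]
  simp_rw [ENNReal.toReal_ofReal (gaussianPDFReal_nonneg _ _ _), smul_eq_mul,
    gaussianPDFReal_zero_mul_exp_mul_sq]
  exact (integrable_exp_neg_mul_sq hpos).const_mul _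

lemma integral_exp_mul_sq_gaussianReal (ht : 2 * t * v < 1) :
    ∫ x, exp (t * x ^ 2) ∂gaussianReal 0 v = (√(1 - 2 * t * v))⁻¹ := by
  rcases eq_or_ne v 0 with rfl | hv
  · simp [gaussianReal_zero_var]
  rw [integral_gaussianReal_eq_integral_smul hv]
  simp_rw [smul_eq_mul, gaussianPDFReal_zero_mul_exp_mul_sq, integral_const_mul,
    integral_gaussian]
  have hv' : (0 : ℝ) < v := by positivity
  rw [← sqrt_inv, ← sqrt_inv, ← sqrt_mul (by positivity)]
  congr 1
  field_simp

variable {Ω : Type*} {mΩ : MeasurableSpace Ω} {P : Measure Ω} {X : Ω → ℝ}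

lemma HasLaw.integrable_exp_mul_sq_of_gaussianReal (hX : HasLaw X (gaussianReal 0 v) P)
    (ht : 2 * t * v < 1) : Integrable (fun ω ↦ exp (t * X ω ^ 2)) P :=
  (integrable_map_measure (g := fun x ↦ exp (t * x ^ 2)) (by fun_prop) hX.aemeasurable).1
    (hX.map_eq ▸ integrable_exp_mul_sq_gaussianReal ht)

lemma HasLaw.mgf_sq_of_gaussianReal (hX : HasLaw X (gaussianReal 0 v) P) (ht : 2 * t * v < 1) :
    mgf (fun ω ↦ X ω ^ 2) P t = (√(1 - 2 * t * v))⁻¹ := by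
  rw [mgf, ← integral_exp_mul_sq_gaussianReal ht]
  exact hX.integral_comp (f := fun x ↦ exp (t * x ^ 2)) (by fun_prop)

lemma measureReal_le_sum_sq_le_of_gaussianReal {ι : Type*} [Fintype ι]
    {θ : ι → Ω → ℝ} (hmeas : ∀ i, Measurable (θ i)) (hindep : iIndepFun θ P)
    (hlaw : ∀ i, HasLaw (θ i) (gaussianReal 0 v) P) (ht₀ : 0 ≤ t) (ht : 2 * t * v < 1)
    (a : ℝ) :
    P.real {ω | a ≤ ∑ i, θ i ω ^ 2} ≤
      exp (-t * a) * (√(1 - 2 * t * v))⁻¹ ^ Fintype.card ι := by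
  have := hindep.isProbabilityMeasure
  have hsq_indep : iIndepFun (fun i ω ↦ θ i ω ^ 2) P :=
    hindep.comp (fun _ x ↦ x ^ 2) fun _ ↦ by fun_prop
  have hsq_meas : ∀ i, Measurable fun ω ↦ θ i ω ^ 2 := fun i ↦ by fun_prop
  have hint := hsq_indep.integrable_exp_mul_sum hsq_meas
    (s := Finset.univ) fun i _ ↦ (hlaw i).integrable_exp_mul_sq_of_gaussianReal ht
  convert measure_ge_le_exp_mul_mgf a ht₀ hint using 2
  · simp
  · rw [hsq_indep.mgf_sum hsq_meas,
      Finset.prod_congr rfl fun i _ ↦ (hlaw i).mgf_sq_of_gaussianReal ht]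
    simp

end ProbabilityTheory

lemma sqrt_add_div_pow_le_exp (m : ℕ) {δ : ℝ} (hδ : 0 ≤ δ) :
    √((m + 2 * √(m * δ) + 2 * δ) / m) ^ m ≤ exp √(m * δ) := by
  rcases m.eq_zero_or_pos with rfl | hm
  · simp
  have hm' : (0 : ℝ) < m := by exact_mod_cast hm
  have hquad : (m + 2 * √(m * δ) + 2 * δ) / m ≤ exp (√(m * δ) / m) ^ 2 := by
    rw [← exp_nat_mul]
    convert quadratic_le_exp_of_nonneg (x := 2 * √(m * δ) / m) (by positivity) using 1
    · field_simp
      rw [sq_sqrt (by positivity)]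
      ring
    · push_cast; ring_nf
  calc √((m + 2 * √(m * δ) + 2 * δ) / m) ^ m ≤ exp (√(m * δ) / m) ^ m := by
        gcongr
        exact sqrt_le_iff.2 ⟨by positivity, hquad⟩
    _ = exp √(m * δ) := by rw [← exp_nat_mul]; field_simp

/-- Laurent–Massart concentration for the squared norm of a standard Gaussian vector:
if `θ₁, …, θ_m` are independent standard Gaussians, then for every `δ > 0`,
`P(∑ θᵢ² ≥ m + 2√(mδ) + 2δ) ≤ exp(−δ)`. -/
theorem gaussian_squared_norm_upper_tail
    {Ω : Type*} [MeasureSpace Ω] [IsProbabilityMeasure (ℙ : Measure Ω)]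
    (m : ℕ) (hm : 0 < m) (θ : Fin m → Ω → ℝ)
    (hmeas : ∀ i, Measurable (θ i))
    (hindep : iIndepFun θ ℙ)
    (hgauss : ∀ i, Measure.map (θ i) ℙ = gaussianReal 0 1)
    (δ : ℝ) (hδ : 0 < δ) :
    ℙ {ω | (m : ℝ) + 2 * Real.sqrt ((m : ℝ) * δ) + 2 * δ ≤ ∑ i, (θ i ω) ^ 2}
      ≤ ENNReal.ofReal (Real.exp (-δ)) := by
  set s := √(m * δ)
  set a := m + 2 * s + 2 * δ
  have hm' : (0 : ℝ) < m := by exact_mod_cast hm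
  have ha : 0 < a := by positivity
  have ha_sub : a - m = 2 * (s + δ) := by simp only [a]; ring
  set t := (a - m) / (2 * a)
  have ht₀ : 0 ≤ t := div_nonneg (by rw [ha_sub]; positivity) (by positivity)
  have ht : 2 * t * (1 : ℝ≥0) < 1 := by
    simp only [t, NNReal.coe_one, mul_one]
    rw [mul_div_assoc', mul_div_mul_left _ _ two_ne_zero, div_lt_one ha]; linarith
  have hta : -t * a = -(s + δ) := by simp only [t]; field_simp; linarith
  have hmgf : (√(1 - 2 * t * (1 : ℝ≥0)))⁻¹ = √(a / m) := by
    have h : 1 - 2 * t * (1 : ℝ≥0) = m / a := by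
      simp only [t, NNReal.coe_one, mul_one]; field_simp; ring
    rw [h, ← sqrt_inv, inv_div]
  have hchernoff := measureReal_le_sum_sq_le_of_gaussianReal hmeas hindep
    (fun i ↦ ⟨(hmeas i).aemeasurable, hgauss i⟩) ht₀ ht a
  rw [hta, hmgf, Fintype.card_fin] at hchernoff
  rw [← ofReal_measureReal]
  refine ENNReal.ofReal_le_ofReal (hchernoff.trans ?_)
  calc exp (-(s + δ)) * √(a / m) ^ m ≤ exp (-(s + δ)) * exp s := by
        gcongr; exact sqrt_add_div_pow_le_exp m hδ.le
    _ = exp (-δ) := by rw [← exp_add]; ring_nf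
end

section
/- Let Φ be a real t×m matrix (t, m ≥ 1) and σ > 0, and set A = ΦᵀΦ + σ²·I_m, which is symmetric positive definite. Then for every u ∈ ℝ^m, every f ∈ ℝ^t, and every θ* ∈ ℝ^m, uᵀA⁻¹Φᵀf ≥ uᵀθ* − ‖u‖·(‖A⁻¹ΦᵀΦ − I_m‖·‖θ*‖ + ‖A⁻¹Φᵀ‖·‖f − Φθ*‖), where ‖·‖ denotes the Euclidean norm on vectors and the spectral (operator) norm on matrices. -/
/-!
With `B = A⁻¹Φᵀ` one has `A⁻¹ΦᵀΦ = BΦ` and the exact splitting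
`Bf = θ* + (BΦ − I)θ* + B(f − Φθ*)`. Pairing with `u`, each of the two error terms is bounded
below by `−‖u‖·‖M‖·‖x‖` (Cauchy–Schwarz, then the operator-norm bound `‖Mx‖ ≤ ‖M‖·‖x‖`).
Positive definiteness of `A` is that of a Gram matrix plus `σ²I` with `σ² > 0`.
-/

open Matrix

/-- The Euclidean norm of a vector in `ℝ^m`. -/
noncomputable def euclNorm {m : ℕ} (v : Fin m → ℝ) : ℝ :=
  Real.sqrt (∑ i, v i ^ 2)

/-- The spectral (operator) norm of a real matrix: the supremum over unit vectors `v`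
of `‖Mv‖`. -/
noncomputable def matSpectralNorm {p q : ℕ} (M : Matrix (Fin p) (Fin q) ℝ) : ℝ :=
  sSup {r | ∃ v : Fin q → ℝ, euclNorm v = 1 ∧ r = euclNorm (M *ᵥ v)}

theorem euclNorm_eq_norm_toLp {m : ℕ} (v : Fin m → ℝ) :
    euclNorm v = ‖WithLp.toLp 2 v‖ := by
  simp [euclNorm, EuclideanSpace.norm_eq, sq_abs]

theorem euclNorm_nonneg {m : ℕ} (v : Fin m → ℝ) : 0 ≤ euclNorm v :=
  Real.sqrt_nonneg _

theorem euclNorm_smul {m : ℕ} (c : ℝ) (v : Fin m → ℝ) :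
    euclNorm (c • v) = |c| * euclNorm v := by
  simp only [euclNorm_eq_norm_toLp, WithLp.toLp_smul, norm_smul, Real.norm_eq_abs]

theorem euclNorm_pos {m : ℕ} {v : Fin m → ℝ} (hv : v ≠ 0) : 0 < euclNorm v := by
  rw [euclNorm_eq_norm_toLp]
  exact norm_pos_iff.mpr (by simpa using hv)

theorem abs_dotProduct_le_euclNorm_mul {m : ℕ} (u v : Fin m → ℝ) :
    |u ⬝ᵥ v| ≤ euclNorm u * euclNorm v := by
  have h := abs_real_inner_le_norm (WithLp.toLp 2 v) (WithLp.toLp 2 u)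
  rwa [EuclideanSpace.inner_toLp_toLp, star_trivial, ← euclNorm_eq_norm_toLp,
    ← euclNorm_eq_norm_toLp, mul_comm (euclNorm v)] at h

theorem exists_euclNorm_mulVec_le {p q : ℕ} (M : Matrix (Fin p) (Fin q) ℝ) :
    ∃ C, ∀ v, euclNorm (M *ᵥ v) ≤ C * euclNorm v := by
  refine ⟨‖(toLpLin 2 2 M).toContinuousLinearMap‖, fun v => ?_⟩
  simpa [euclNorm_eq_norm_toLp, toLpLin_toLp] using
    (toLpLin 2 2 M).toContinuousLinearMap.le_opNorm (WithLp.toLp 2 v)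

theorem euclNorm_mulVec_le_matSpectralNorm_mul {p q : ℕ} (M : Matrix (Fin p) (Fin q) ℝ)
    (v : Fin q → ℝ) : euclNorm (M *ᵥ v) ≤ matSpectralNorm M * euclNorm v := by
  obtain ⟨C, hC⟩ := exists_euclNorm_mulVec_le M
  have hbdd : BddAbove {r | ∃ w : Fin q → ℝ, euclNorm w = 1 ∧ r = euclNorm (M *ᵥ w)} :=
    ⟨C, by rintro r ⟨w, hw, rfl⟩; simpa [hw] using hC w⟩
  rcases eq_or_ne v 0 with rfl | hv
  · simp [euclNorm]
  have hpos := euclNorm_pos hv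
  set w := (euclNorm v)⁻¹ • v
  have hw : euclNorm w = 1 := by
    rw [euclNorm_smul, abs_of_pos (inv_pos.mpr hpos), inv_mul_cancel₀ hpos.ne']
  have hle : euclNorm (M *ᵥ w) ≤ matSpectralNorm M := le_csSup hbdd ⟨w, hw, rfl⟩
  rw [mulVec_smul, euclNorm_smul, abs_of_pos (inv_pos.mpr hpos), inv_mul_le_iff₀ hpos] at hle
  linarith

theorem neg_le_dotProduct_mulVec {p q : ℕ} (u : Fin p → ℝ) (M : Matrix (Fin p) (Fin q) ℝ)
    (v : Fin q → ℝ) :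
    -(euclNorm u * (matSpectralNorm M * euclNorm v)) ≤ u ⬝ᵥ (M *ᵥ v) :=
  calc -(euclNorm u * (matSpectralNorm M * euclNorm v))
      ≤ -(euclNorm u * euclNorm (M *ᵥ v)) := by
        gcongr
        · exact euclNorm_nonneg u
        · exact euclNorm_mulVec_le_matSpectralNorm_mul M v
    _ ≤ -|u ⬝ᵥ (M *ᵥ v)| := neg_le_neg (abs_dotProduct_le_euclNorm_mul u _)
    _ ≤ u ⬝ᵥ (M *ᵥ v) := neg_abs_le _

theorem mulVec_eq_add_mul_sub_one_mulVec_add {m t : ℕ} (B : Matrix (Fin m) (Fin t) ℝ)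
    (Φ : Matrix (Fin t) (Fin m) ℝ) (θ : Fin m → ℝ) (f : Fin t → ℝ) :
    B *ᵥ f = θ + (B * Φ - 1) *ᵥ θ + B *ᵥ (f - Φ *ᵥ θ) := by
  simp only [sub_mulVec, mulVec_sub, one_mulVec, mulVec_mulVec]
  abel

theorem dotProduct_sub_le_dotProduct_mulVec {m t : ℕ} (B : Matrix (Fin m) (Fin t) ℝ)
    (Φ : Matrix (Fin t) (Fin m) ℝ) (u θ : Fin m → ℝ) (f : Fin t → ℝ) :
    u ⬝ᵥ θ - euclNorm u * (matSpectralNorm (B * Φ - 1) * euclNorm θ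
        + matSpectralNorm B * euclNorm (f - Φ *ᵥ θ)) ≤ u ⬝ᵥ (B *ᵥ f) := by
  rw [mulVec_eq_add_mul_sub_one_mulVec_add B Φ θ f, dotProduct_add, dotProduct_add]
  linarith [neg_le_dotProduct_mulVec u (B * Φ - 1) θ, neg_le_dotProduct_mulVec u B (f - Φ *ᵥ θ)]

theorem posDef_transpose_mul_self_add_smul_one {n m : Type*} [Fintype n] [Fintype m]
    [DecidableEq m] (Φ : Matrix n m ℝ) {c : ℝ} (hc : 0 < c) :
    (Φᵀ * Φ + c • 1).PosDef :=
  PosDef.posSemidef_add (by simpa using posSemidef_conjTranspose_mul_self Φ) (PosDef.one.smul hc)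

theorem lemma4_deterministic_core_general
    (t m : ℕ)
    (Φ : Matrix (Fin t) (Fin m) ℝ) (σ : ℝ) (hσ : 0 < σ)
    (A : Matrix (Fin m) (Fin m) ℝ) (hA : A = Φᵀ * Φ + σ ^ 2 • 1) :
    A.PosDef ∧
    ∀ (u θs : Fin m → ℝ) (f : Fin t → ℝ),
      u ⬝ᵥ θs
        - euclNorm u * (matSpectralNorm (A⁻¹ * (Φᵀ * Φ) - 1) * euclNorm θs
            + matSpectralNorm (A⁻¹ * Φᵀ) * euclNorm (f - Φ *ᵥ θs))
        ≤ u ⬝ᵥ ((A⁻¹ * Φᵀ) *ᵥ f) := by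
  refine ⟨hA ▸ posDef_transpose_mul_self_add_smul_one Φ (pow_pos hσ 2), fun u θs f => ?_⟩
  rw [← Matrix.mul_assoc]
  exact dotProduct_sub_le_dotProduct_mulVec (A⁻¹ * Φᵀ) Φ u θs f

/-- Deterministic core of the paper's Lemma 4: for `A = ΦᵀΦ + σ²I` with `σ > 0`,
every `u, θ* ∈ ℝ^m` and `f ∈ ℝ^t`,
`uᵀA⁻¹Φᵀf ≥ uᵀθ* − ‖u‖·(‖A⁻¹ΦᵀΦ − I‖·‖θ*‖ + ‖A⁻¹Φᵀ‖·‖f − Φθ*‖)`. -/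
theorem lemma4_deterministic_core
    (t m : ℕ) (ht : 0 < t) (hm : 0 < m)
    (Φ : Matrix (Fin t) (Fin m) ℝ) (σ : ℝ) (hσ : 0 < σ)
    (A : Matrix (Fin m) (Fin m) ℝ) (hA : A = Φᵀ * Φ + σ ^ 2 • 1) :
    A.PosDef ∧
    ∀ (u θs : Fin m → ℝ) (f : Fin t → ℝ),
      u ⬝ᵥ θs
        - euclNorm u * (matSpectralNorm (A⁻¹ * (Φᵀ * Φ) - 1) * euclNorm θs
            + matSpectralNorm (A⁻¹ * Φᵀ) * euclNorm (f - Φ *ᵥ θs))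
        ≤ u ⬝ᵥ ((A⁻¹ * Φᵀ) *ᵥ f) :=
  lemma4_deterministic_core_general t m Φ σ hσ A hA
end

section
/- Let Φ be a real t×m matrix (t, m ≥ 1) and σ > 0, and set A = ΦᵀΦ + σ²·I_m, which is symmetric positive definite with smallest eigenvalue λmin(A) > 0. Then for every vector v ∈ ℝ^m, vᵀ(A⁻¹ΦᵀΦA⁻¹)v ≥ (1 − σ²/λmin(A))·vᵀA⁻¹v. -/
/-! Since `ΦᵀΦ = A - σ²I`, the middle matrix is `A⁻¹ - σ²A⁻²`. With `w = A⁻¹v` the two quadratic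
forms are `vᵀA⁻¹v = wᵀAw` and `vᵀA⁻²v = wᵀw`, and the Rayleigh bound `λmin(A)·wᵀw ≤ wᵀAw`
gives `σ²·vᵀA⁻²v ≤ (σ²/λmin(A))·vᵀA⁻¹v`. -/

open Matrix
open scoped MatrixOrder

namespace Matrix

variable {n : Type*} [Fintype n] [DecidableEq n]

theorem inv_mul_sub_smul_one_mul_inv {R : Type*} [CommRing R] {A : Matrix n n R}
    (hA : IsUnit A.det) (s : R) :
    A⁻¹ * (A - s • 1) * A⁻¹ = A⁻¹ - s • (A⁻¹ * A⁻¹) := by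
  rw [Matrix.mul_sub, Matrix.sub_mul, mul_nonsing_inv_cancel_right _ _ hA, Matrix.mul_smul,
    Matrix.mul_one, Matrix.smul_mul]

theorem IsHermitian.posSemidef_sub_smul_one {A : Matrix n n ℝ} (hA : A.IsHermitian) {c : ℝ}
    (hc : ∀ i, c ≤ hA.eigenvalues i) : (A - c • 1).PosSemidef := by
  have hcA : algebraMap ℝ _ c ≤ A := by
    rw [algebraMap_le_iff_le_spectrum hA.isSelfAdjoint, hA.spectrum_real_eq_range_eigenvalues]
    rintro _ ⟨i, rfl⟩
    exact hc i
  rwa [Matrix.le_iff, Algebra.algebraMap_eq_smul_one] at hcA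

theorem IsHermitian.mul_dotProduct_self_le {A : Matrix n n ℝ} (hA : A.IsHermitian) {c : ℝ}
    (hc : ∀ i, c ≤ hA.eigenvalues i) (x : n → ℝ) : c * (x ⬝ᵥ x) ≤ x ⬝ᵥ (A *ᵥ x) := by
  have h := (hA.posSemidef_sub_smul_one hc).dotProduct_mulVec_nonneg x
  simpa only [sub_mulVec, smul_mulVec, one_mulVec, dotProduct_sub, dotProduct_smul, smul_eq_mul,
    star_trivial, sub_nonneg] using h

theorem IsHermitian.dotProduct_inv_mulVec {A : Matrix n n ℝ} (hA : A.IsHermitian) (v y : n → ℝ) :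
    v ⬝ᵥ (A⁻¹ *ᵥ y) = (A⁻¹ *ᵥ v) ⬝ᵥ y := by
  rw [dotProduct_mulVec, ← mulVec_transpose, (isHermitian_iff_isSymm.mp hA.inv).eq]

theorem IsHermitian.mul_dotProduct_inv_mul_inv_le {A : Matrix n n ℝ} (hA : A.IsHermitian)
    (hdet : IsUnit A.det) {c : ℝ} (hc : ∀ i, c ≤ hA.eigenvalues i) (v : n → ℝ) :
    c * (v ⬝ᵥ ((A⁻¹ * A⁻¹) *ᵥ v)) ≤ v ⬝ᵥ (A⁻¹ *ᵥ v) := by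
  set w := A⁻¹ *ᵥ v
  have hAw : A *ᵥ w = v := by rw [mulVec_mulVec, mul_nonsing_inv _ hdet, one_mulVec]
  calc c * (v ⬝ᵥ ((A⁻¹ * A⁻¹) *ᵥ v)) = c * (w ⬝ᵥ w) := by
        rw [← mulVec_mulVec, hA.dotProduct_inv_mulVec]
    _ ≤ w ⬝ᵥ (A *ᵥ w) := hA.mul_dotProduct_self_le hc w
    _ = v ⬝ᵥ (A⁻¹ *ᵥ v) := by rw [hAw, dotProduct_comm]

theorem IsHermitian.one_sub_div_mul_dotProduct_inv_le {A : Matrix n n ℝ} (hA : A.IsHermitian)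
    (hdet : IsUnit A.det) {c s : ℝ} (hc_pos : 0 < c) (hc : ∀ i, c ≤ hA.eigenvalues i)
    (hs : 0 ≤ s) (v : n → ℝ) :
    (1 - s / c) * (v ⬝ᵥ (A⁻¹ *ᵥ v)) ≤ v ⬝ᵥ ((A⁻¹ * (A - s • 1) * A⁻¹) *ᵥ v) := by
  have hsq := mul_le_mul_of_nonneg_left (hA.mul_dotProduct_inv_mul_inv_le hdet hc v)
    (div_nonneg hs hc_pos.le)
  rw [← mul_assoc, div_mul_cancel₀ s hc_pos.ne'] at hsq
  rw [inv_mul_sub_smul_one_mul_inv hdet, sub_mulVec, smul_mulVec, dotProduct_sub,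
    dotProduct_smul, smul_eq_mul]
  linarith

end Matrix

theorem inv_gram_inv_rayleigh_lower_bound_general
    (t m : ℕ) (hm : 0 < m)
    (Φ : Matrix (Fin t) (Fin m) ℝ) (σ : ℝ) (hσ : 0 < σ)
    (A : Matrix (Fin m) (Fin m) ℝ) (hA : A = Φᵀ * Φ + σ ^ 2 • 1)
    (hHerm : A.IsHermitian) :
    A.PosDef ∧ 0 < (⨅ i, hHerm.eigenvalues i) ∧
    ∀ v : Fin m → ℝ,
      (1 - σ ^ 2 / (⨅ i, hHerm.eigenvalues i)) * (v ⬝ᵥ (A⁻¹ *ᵥ v))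
        ≤ v ⬝ᵥ ((A⁻¹ * (Φᵀ * Φ) * A⁻¹) *ᵥ v) := by
  have : Nonempty (Fin m) := ⟨⟨0, hm⟩⟩
  have hApd : A.PosDef := by
    rw [hA, ← conjTranspose_eq_transpose_of_trivial]
    exact .posSemidef_add (posSemidef_conjTranspose_mul_self Φ) (PosDef.one.smul (pow_pos hσ 2))
  have hmin_pos : 0 < ⨅ i, hHerm.eigenvalues i := by
    obtain ⟨i, hi⟩ := exists_eq_ciInf_of_finite (f := hHerm.eigenvalues)
    exact hi ▸ hApd.eigenvalues_pos i
  refine ⟨hApd, hmin_pos, fun v => ?_⟩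
  have hgram : Φᵀ * Φ = A - σ ^ 2 • 1 := by rw [hA, add_sub_cancel_right]
  rw [hgram]
  exact hHerm.one_sub_div_mul_dotProduct_inv_le (isUnit_iff_ne_zero.2 hApd.det_pos.ne')
    hmin_pos (Finite.ciInf_le _) (sq_nonneg σ) v

/-- Lower bound on the conditional variance ratio from the proof of the paper's
Lemma 6: for `A = ΦᵀΦ + σ²I` with `σ > 0` and every `v`,
`vᵀA⁻¹ΦᵀΦA⁻¹v ≥ (1 − σ²/λmin(A))·vᵀA⁻¹v`. -/
theorem inv_gram_inv_rayleigh_lower_bound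
    (t m : ℕ) (ht : 0 < t) (hm : 0 < m)
    (Φ : Matrix (Fin t) (Fin m) ℝ) (σ : ℝ) (hσ : 0 < σ)
    (A : Matrix (Fin m) (Fin m) ℝ) (hA : A = Φᵀ * Φ + σ ^ 2 • 1)
    (hHerm : A.IsHermitian) :
    A.PosDef ∧ 0 < (⨅ i, hHerm.eigenvalues i) ∧
    ∀ v : Fin m → ℝ,
      (1 - σ ^ 2 / (⨅ i, hHerm.eigenvalues i)) * (v ⬝ᵥ (A⁻¹ *ᵥ v))
        ≤ v ⬝ᵥ ((A⁻¹ * (Φᵀ * Φ) * A⁻¹) *ᵥ v) :=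
  inv_gram_inv_rayleigh_lower_bound_general t m hm Φ σ hσ A hA hHerm
end
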